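/- For n ≥ 8, let G be the complement of K_{1,n-3} ∪ K_2 (on n vertices). Then the least signless Laplacian eigenvalue of G satisfies q_n(G) ≥ 1. -/

import Mathlib

/-!
The signless Laplacian has quadratic form `xᵀ Q x = ∑_{ij ∈ E} (x i + x j)²`, and isomorphic graphs
have the same spectrum, so it suffices to show `‖x‖² ≤ xᵀ Q x` on the concrete complement of
`K_{1,m} ∪ K₂`, `m = n - 3`. There the quadratic form is an explicit polynomial in the values at
the centre and at the ends of the edge and in the sum and sum of squares over the leaves, and the
inequality is a sum-of-squares identity valid for `m ≥ 4`.
-/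

open Matrix SimpleGraph

/-- The signless Laplacian matrix `Q(G) = D(G) + A(G)` of a simple graph, over `ℝ`. -/
def SimpleGraph.signlessLap {V : Type*} [Fintype V] [DecidableEq V] (G : SimpleGraph V)
    [DecidableRel G.Adj] : Matrix V V ℝ :=
  G.degMatrix ℝ + G.adjMatrix ℝ

open Finset

theorem Matrix.le_of_mem_spectrum_of_forall_mul_dotProduct_le {n : Type*} [Fintype n]
    [DecidableEq n] {A : Matrix n n ℝ} {c μ : ℝ} (hA : ∀ x, c * (x ⬝ᵥ x) ≤ x ⬝ᵥ (A *ᵥ x))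
    (hμ : μ ∈ spectrum ℝ A) : c ≤ μ := by
  rw [← spectrum_toLin', ← Module.End.hasEigenvalue_iff_mem_spectrum] at hμ
  obtain ⟨x, hx⟩ := hμ.exists_hasEigenvector
  have hAx : A *ᵥ x = μ • x := hx.apply_eq_smul
  have hpos : 0 < x ⬝ᵥ x :=
    (dotProduct_self_star_nonneg x).lt_of_ne' (dotProduct_self_eq_zero.not.mpr hx.2)
  have hcμ := hA x
  rw [hAx, dotProduct_smul, smul_eq_mul] at hcμ
  exact le_of_mul_le_mul_right hcμ hpos

theorem sum_sum_ite_eq_zero_add_sq {ι : Type*} [Fintype ι] [DecidableEq ι] (l : ι → ℝ) :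
    ∑ i, ∑ j, (if i = j then 0 else (l i + l j) ^ 2)
      = 2 * (Fintype.card ι - 2) * ∑ i, l i ^ 2 + 2 * (∑ i, l i) ^ 2 := by
  simp only [sum_ite, sum_const_zero, zero_add, filter_ne, sum_erase_eq_sub, mem_univ, ← two_mul,
    mul_pow]
  simp only [sum_sub_distrib, add_sq, sum_add_distrib, ← mul_sum, ← sum_mul, sum_const, card_univ,
    nsmul_eq_mul]
  ring

namespace SimpleGraph

variable {V W : Type*}

def Iso.compl {G : SimpleGraph V} {G' : SimpleGraph W} (e : G ≃g G') : Gᶜ ≃g G'ᶜ :=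
  ⟨e.toEquiv, fun {_ _} => by
    simp only [compl_adj]
    exact and_congr e.injective.ne_iff (not_congr e.map_adj_iff)⟩

variable [Fintype V] [DecidableEq V] [Fintype W] [DecidableEq W]

theorem dotProduct_signlessLap_mulVec (G : SimpleGraph V) [DecidableRel G.Adj] (x : V → ℝ) :
    x ⬝ᵥ (G.signlessLap *ᵥ x) = (∑ i, ∑ j, if G.Adj i j then (x i + x j) ^ 2 else 0) / 2 := by
  simp_rw [signlessLap, add_mulVec, dotProduct_add, dotProduct_mulVec_degMatrix,
    dotProduct_mulVec_adjMatrix, degree_eq_sum_if_adj, sum_mul, ite_mul, one_mul, zero_mul,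
    ← sum_add_distrib, ite_add_ite, add_zero]
  rw [← add_self_div_two (∑ i : V, ∑ j : V, _)]
  conv_lhs => enter [1, 2]; rw [sum_comm]
  conv_lhs => enter [1, 2, 2, i, 2, j]; rw [if_congr (G.adj_comm j i) rfl rfl]
  simp_rw [← sum_add_distrib, ite_add_ite]
  congr 2 with i
  congr 2 with j
  ring_nf

theorem Iso.submatrix_signlessLap {G : SimpleGraph V} {G' : SimpleGraph W} [DecidableRel G.Adj]
    [DecidableRel G'.Adj] (e : G ≃g G') : G'.signlessLap.submatrix e e = G.signlessLap := by
  ext i j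
  simp [signlessLap, degMatrix, diagonal_apply, adjMatrix_apply, e.injective.eq_iff, e.map_adj_iff]

theorem Iso.spectrum_signlessLap {G : SimpleGraph V} {G' : SimpleGraph W} [DecidableRel G.Adj]
    [DecidableRel G'.Adj] (e : G ≃g G') :
    spectrum ℝ G.signlessLap = spectrum ℝ G'.signlessLap := by
  rw [← e.submatrix_signlessLap]
  exact AlgEquiv.spectrum_eq (reindexAlgEquiv ℝ ℝ (e : V ≃ W).symm) G'.signlessLap

theorem dotProduct_self_le_dotProduct_signlessLap_compl_star_sum_edge {m : ℕ} (hm : 4 ≤ m)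
    [DecidableRel (completeBipartiteGraph (Fin 1) (Fin m) ⊕g (⊤ : SimpleGraph (Fin 2)))ᶜ.Adj]
    (x : (Fin 1 ⊕ Fin m) ⊕ Fin 2 → ℝ) :
    x ⬝ᵥ x ≤ x ⬝ᵥ
      ((completeBipartiteGraph (Fin 1) (Fin m) ⊕g (⊤ : SimpleGraph (Fin 2)))ᶜ.signlessLap *ᵥ x) := by
  rw [dotProduct_signlessLap_mulVec]
  simp only [dotProduct, ← sq, Fintype.sum_sum_type, Fin.sum_univ_two, univ_unique, sum_singleton,
    compl_adj, SimpleGraph.sum_adj, completeBipartiteGraph_adj, top_adj, sum_add_distrib,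
    Fin.default_eq_zero, Fin.isValue, ne_eq, not_true_eq_false, Sum.isLeft_inl, Sum.isRight_inl,
    Bool.false_eq_true, and_false, and_true, or_self, not_false_eq_true,
    ↓reduceIte, Sum.inl.injEq, reduceCtorEq, Sum.isRight_inr, and_self, Sum.isLeft_inr, or_false,
    sum_const_zero, add_zero, zero_add, or_true, Sum.inr.injEq, ite_not, zero_ne_one, one_ne_zero]
  simp only [sum_sum_ite_eq_zero_add_sq]
  simp only [add_sq, sum_add_distrib, ← mul_sum, ← sum_mul, sum_const, card_univ, nsmul_eq_mul,
    Fintype.card_fin]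
  set c := x (.inl (.inl 0))
  set u := x (.inr 0)
  set v := x (.inr 1)
  set S := ∑ i, x (.inl (.inr i))
  set P := ∑ i, x (.inl (.inr i)) ^ 2
  have hP : 0 ≤ P := sum_nonneg fun i _ => sq_nonneg _
  have hm' : (4 : ℝ) ≤ m := by exact_mod_cast hm
  -- The difference of the two sides is
  -- `(c + u + v)² + (S + u + v)² + (m - 1) P + (m - 4) (u² + v²) + 2 (u - v)²`.
  linarith [sq_nonneg (c + u + v), sq_nonneg (S + u + v), sq_nonneg (u - v),
    mul_nonneg (by linarith : (0 : ℝ) ≤ m - 1) hP,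
    mul_nonneg (by linarith : (0 : ℝ) ≤ m - 4) (add_nonneg (sq_nonneg u) (sq_nonneg v))]

end SimpleGraph

theorem signlessLap_least_eigenvalue_compl_star_union_edge_general
    {V : Type*} [Fintype V] [DecidableEq V] (H : SimpleGraph V) [DecidableRel H.Adj]
    (n : ℕ) (h8 : 8 ≤ n)
    (hH : Nonempty (H ≃g
      completeBipartiteGraph (Fin 1) (Fin (n - 3)) ⊕g (⊤ : SimpleGraph (Fin 2)))) :
    ∀ μ ∈ spectrum ℝ (Hᶜ).signlessLap, 1 ≤ μ := by
  classical
  obtain ⟨e⟩ := hH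
  intro μ hμ
  rw [e.compl.spectrum_signlessLap] at hμ
  refine le_of_mem_spectrum_of_forall_mul_dotProduct_le (fun x => ?_) hμ
  rw [one_mul]
  exact dotProduct_self_le_dotProduct_signlessLap_compl_star_sum_edge (by omega) x

/-- For `n ≥ 8`, if `G` is the complement of `K_{1,n-3} ∪ K₂` on `n` vertices, then
every signless Laplacian eigenvalue of `G` (in particular the least) is at least `1`. -/
theorem signlessLap_least_eigenvalue_compl_star_union_edge
    {V : Type*} [Fintype V] [DecidableEq V] (H : SimpleGraph V) [DecidableRel H.Adj]
    (n : ℕ) (hn : Fintype.card V = n) (h8 : 8 ≤ n)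
    (hH : Nonempty (H ≃g
      completeBipartiteGraph (Fin 1) (Fin (n - 3)) ⊕g (⊤ : SimpleGraph (Fin 2)))) :
    ∀ μ ∈ spectrum ℝ (Hᶜ).signlessLap, 1 ≤ μ :=
  signlessLap_least_eigenvalue_compl_star_union_edge_general H n h8 hH
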